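/- Let P(z) = a_n ∏_{ν=1}^{n} (z − z_ν) be a complex polynomial of degree n ≥ 1 whose zeros satisfy |z_ν| ≥ k_ν ≥ 1 for 1 ≤ ν ≤ n, and let Q(z) = z^n · conj(P(1/conj(z))). Set t₀ = 1 + n / (∑_{ν=1}^{n} 1/(k_ν − 1)) if k_ν > 1 for all ν, and t₀ = 1 if k_ν = 1 for some ν. Then for every complex number α with |α| ≥ 1 and every z with |z| = 1, (1 + t₀) |D_α P(z)| ≤ (|α| + t₀) (|P′(z)| + |Q′(z)|). -/

import Mathlib

/-!
On the unit circle `|Q'(w)| = |n P(w) - w P'(w)|`, so after the triangle inequality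
`|D_α P| ≤ |n P - w P'| + |α| |P'|` it suffices to show `t₀ |P'(w)| ≤ |n P(w) - w P'(w)|`.
With `s = w P'(w) / P(w) = ∑ w / (w - z_ν)` this reads `t₀ |s| ≤ |n - s|`.
If `|z| = r > 1`, the point `w / (w - z)` lies on the circle with diameter
`[-1/(r-1), 1/(r+1)]`; summing, `s` lies in the disc with diameter `[-S, n/(t₀+1)]`,
where `S = ∑ 1/(k_ν - 1)` and the right end point comes from Cauchy–Schwarz. That disc is the
Apollonius disc `{s : t₀ |s| ≤ |n - s|}`. If some `k_ν = 1`, one still has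
`Re (w / (w - z_ν)) ≤ 1/2`, so `Re s ≤ n/2`, which is `|s| ≤ |n - s|`.
-/

open Polynomial Finset

namespace Polynomial

variable {R : Type*} [CommRing R]

theorem coeff_X_mul_derivative (f : R[X]) (i : ℕ) :
    (X * derivative f).coeff i = f.coeff i * i := by
  rcases i with _ | i
  · simp
  · rw [coeff_X_mul, coeff_derivative, Nat.cast_succ]

theorem natDegree_X_mul_derivative_le (f : R[X]) : (X * derivative f).natDegree ≤ f.natDegree := by
  refine natDegree_le_iff_coeff_eq_zero.mpr fun i hi => ?_
  rw [coeff_X_mul_derivative, coeff_eq_zero_of_natDegree_lt hi, zero_mul]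

theorem X_mul_derivative_reflect {N : ℕ} {f : R[X]} (hf : f.natDegree ≤ N) :
    X * derivative (reflect N f) = reflect N (C (N : R) * f - X * derivative f) := by
  ext i
  rw [coeff_X_mul_derivative, coeff_reflect, coeff_reflect, coeff_sub, coeff_C_mul,
    coeff_X_mul_derivative]
  rcases le_or_gt i N with hi | hi
  · rw [revAt_le hi, Nat.cast_sub hi]
    ring
  · rw [revAt_eq_self_of_lt hi, coeff_eq_zero_of_natDegree_lt (hf.trans_lt hi)]
    ring

theorem norm_eval_reflect {K : Type*} [NormedField K] {N : ℕ} {f : K[X]} (hf : f.natDegree ≤ N)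
    {w : K} (hw : w ≠ 0) : ‖(reflect N f).eval w‖ = ‖w‖ ^ N * ‖f.eval w⁻¹‖ := by
  let := invertibleOfNonzero (inv_ne_zero hw)
  have h := eval₂_reflect_mul_pow (RingHom.id K) w⁻¹ N f hf
  rw [invOf_eq_inv, inv_inv] at h
  rw [eval, eval, ← h, norm_mul, norm_pow, norm_inv, mul_left_comm, ← mul_pow,
    mul_inv_cancel₀ (norm_ne_zero_iff.mpr hw), one_pow, mul_one]

theorem eval_derivative_prod_X_sub_C {K : Type*} [Field K] {ι : Type*} [DecidableEq ι]
    (s : Finset ι) (z : ι → K) {w : K} (hw : ∀ i ∈ s, w ≠ z i) :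
    (derivative (∏ i ∈ s, (X - C (z i)))).eval w
      = (∏ i ∈ s, (w - z i)) * ∑ i ∈ s, (w - z i)⁻¹ := by
  rw [derivative_prod_finset, eval_finsetSum, Finset.mul_sum]
  refine Finset.sum_congr rfl fun i hi => ?_
  rw [derivative_X_sub_C, mul_one, eval_prod, ← Finset.mul_prod_erase s _ hi]
  simp only [eval_sub, eval_X, eval_C]
  field_simp [sub_ne_zero.mpr (hw i hi)]

end Polynomial

theorem norm_derivative_reflect_map_conj_eval {n : ℕ} {P : ℂ[X]} (hP : P.natDegree ≤ n) {w : ℂ}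
    (hw : ‖w‖ = 1) :
    ‖(reflect n (P.map (starRingEnd ℂ))).derivative.eval w‖
      = ‖(n : ℂ) * P.eval w - w * P.derivative.eval w‖ := by
  set g := P.map (starRingEnd ℂ)
  have hg : g.natDegree ≤ n := natDegree_map_le.trans hP
  have hg' : (C (n : ℂ) * g - X * derivative g).natDegree ≤ n :=
    max_self n ▸ natDegree_sub_le_of_le (natDegree_C_mul_le _ _ |>.trans hg)
      (natDegree_X_mul_derivative_le g |>.trans hg)
  have hw0 : w ≠ 0 := norm_ne_zero_iff.mp (by rw [hw]; exact one_ne_zero)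
  calc ‖(reflect n g).derivative.eval w‖ = ‖(X * derivative (reflect n g)).eval w‖ := by
        rw [eval_mul, eval_X, norm_mul, hw, one_mul]
    _ = ‖(C (n : ℂ) * g - X * derivative g).eval (starRingEnd ℂ w)‖ := by
        rw [X_mul_derivative_reflect hg, norm_eval_reflect hg' hw0, hw, one_pow, one_mul,
          Complex.inv_eq_conj hw]
    _ = ‖(n : ℂ) * P.eval w - w * P.derivative.eval w‖ := by
        rw [← Complex.norm_conj]
        simp [g, derivative_map, eval_map, eval₂_at_apply]

theorem Complex.re_sq_add_im_sq (z : ℂ) : z.re ^ 2 + z.im ^ 2 = ‖z‖ ^ 2 := by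
  rw [Complex.sq_norm, Complex.normSq_apply, sq, sq]

def diameterDisc (a b : ℝ) : Set ℂ := Metric.closedBall (((a + b) / 2 : ℝ) : ℂ) ((b - a) / 2)

theorem mem_diameterDisc_iff {a b : ℝ} (hab : a ≤ b) {s : ℂ} :
    s ∈ diameterDisc a b ↔ ‖s‖ ^ 2 - (a + b) * s.re + a * b ≤ 0 := by
  have hsq : ‖s - (((a + b) / 2 : ℝ) : ℂ)‖ ^ 2 = ‖s‖ ^ 2 - (a + b) * s.re + ((a + b) / 2) ^ 2 := by
    simp only [Complex.sq_norm, Complex.normSq_apply, Complex.sub_re, Complex.sub_im,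
      Complex.ofReal_re, Complex.ofReal_im]
    ring
  rw [diameterDisc, Metric.mem_closedBall, dist_eq_norm,
    ← pow_le_pow_iff_left₀ (norm_nonneg _) (by linarith) two_ne_zero, hsq]
  constructor <;> intro h <;> nlinarith

theorem div_sub_mem_diameterDisc {w z : ℂ} (hw : ‖w‖ = 1) (hz : 1 < ‖z‖) :
    w / (w - z) ∈ diameterDisc (-(‖z‖ - 1)⁻¹) (‖z‖ + 1)⁻¹ := by
  have hwz : w - z ≠ 0 := fun h => by rw [sub_eq_zero.mp h] at hw; linarith
  have h1 : 0 < ‖z‖ - 1 := by linarith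
  have h2 : 0 < ‖z‖ + 1 := by linarith
  have hN : (w.re - z.re) ^ 2 + (w.im - z.im) ^ 2 ≠ 0 := by
    rw [← Complex.sub_re, ← Complex.sub_im, Complex.re_sq_add_im_sq]
    exact pow_ne_zero 2 (norm_ne_zero_iff.mpr hwz)
  have hw2 := Complex.re_sq_add_im_sq w
  have hz2 := Complex.re_sq_add_im_sq z
  rw [hw, one_pow] at hw2
  rw [mem_diameterDisc_iff (by linarith [inv_pos.mpr h1, inv_pos.mpr h2])]
  refine le_of_eq ?_
  rw [norm_div, div_pow, hw, Complex.sq_norm, Complex.div_re, Complex.normSq_apply]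
  simp only [Complex.sub_re, Complex.sub_im, ← sq]
  field_simp
  linear_combination hw2 - hz2

theorem norm_le_norm_sub_of_two_mul_re_le {s : ℂ} {m : ℝ} (hm : 0 ≤ m) (h : 2 * s.re ≤ m) :
    ‖s‖ ≤ ‖(m : ℂ) - s‖ := by
  rw [← pow_le_pow_iff_left₀ (norm_nonneg _) (norm_nonneg _) two_ne_zero]
  simp only [Complex.sq_norm, Complex.normSq_apply, Complex.sub_re, Complex.sub_im,
    Complex.ofReal_re, Complex.ofReal_im]
  nlinarith

theorem two_mul_re_div_sub_le_one {w z : ℂ} (hw : ‖w‖ = 1) (hz : 1 ≤ ‖z‖) :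
    2 * (w / (w - z)).re ≤ 1 := by
  rcases eq_or_ne w z with rfl | hwz
  · simp
  have hN : 0 < (w.re - z.re) ^ 2 + (w.im - z.im) ^ 2 := by
    rw [← Complex.sub_re, ← Complex.sub_im, Complex.re_sq_add_im_sq]
    exact pow_pos (norm_pos_iff.mpr (sub_ne_zero.mpr hwz)) 2
  have hw2 := Complex.re_sq_add_im_sq w
  have hz2 : 1 ≤ z.re ^ 2 + z.im ^ 2 := Complex.re_sq_add_im_sq z ▸ one_le_pow₀ hz
  rw [hw, one_pow] at hw2
  rw [Complex.div_re, Complex.normSq_apply]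
  simp only [Complex.sub_re, Complex.sub_im, ← sq]
  rw [← add_div, mul_div_assoc', div_le_one hN]
  nlinarith

theorem sum_mem_diameterDisc {ι : Type*} {t : Finset ι} {g : ι → ℂ} {a b : ι → ℝ}
    (h : ∀ i ∈ t, g i ∈ diameterDisc (a i) (b i)) :
    ∑ i ∈ t, g i ∈ diameterDisc (∑ i ∈ t, a i) (∑ i ∈ t, b i) := by
  simp only [diameterDisc, Metric.mem_closedBall, dist_eq_norm] at h ⊢
  calc ‖∑ i ∈ t, g i - (((∑ i ∈ t, a i + ∑ i ∈ t, b i) / 2 : ℝ) : ℂ)‖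
      = ‖∑ i ∈ t, (g i - (((a i + b i) / 2 : ℝ) : ℂ))‖ := by
        rw [sum_sub_distrib, ← sum_add_distrib, sum_div]; push_cast; rfl
    _ ≤ ∑ i ∈ t, (b i - a i) / 2 := (norm_sum_le _ _).trans (sum_le_sum h)
    _ = (∑ i ∈ t, b i - ∑ i ∈ t, a i) / 2 := by rw [← sum_sub_distrib, sum_div]

theorem diameterDisc_mono {a b a' b' : ℝ} (ha : a' ≤ a) (hb : b ≤ b') :
    diameterDisc a b ⊆ diameterDisc a' b' := by
  refine Metric.closedBall_subset_closedBall' ?_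
  rw [Complex.dist_eq, ← Complex.ofReal_sub, Complex.norm_real, Real.norm_eq_abs]
  have : |(a + b) / 2 - (a' + b') / 2| ≤ (a - a' + (b' - b)) / 2 :=
    abs_le.mpr ⟨by linarith, by linarith⟩
  linarith

theorem mul_norm_le_norm_sub_of_mem_diameterDisc {m t : ℝ} (hm : 0 ≤ m) (ht : 1 < t) {s : ℂ}
    (hs : s ∈ diameterDisc (-(m / (t - 1))) (m / (t + 1))) : t * ‖s‖ ≤ ‖(m : ℂ) - s‖ := by
  have h1 : 0 < t - 1 := by linarith
  have h2 : 0 < t + 1 := by linarith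
  rw [mem_diameterDisc_iff (by linarith [div_nonneg hm h1.le, div_nonneg hm h2.le])] at hs
  rw [← pow_le_pow_iff_left₀ (by positivity) (norm_nonneg _) two_ne_zero, mul_pow]
  have hsq : ‖(m : ℂ) - s‖ ^ 2 = m ^ 2 - 2 * m * s.re + ‖s‖ ^ 2 := by
    simp only [Complex.sq_norm, Complex.normSq_apply, Complex.sub_re, Complex.sub_im,
      Complex.ofReal_re, Complex.ofReal_im]
    ring
  rw [hsq]
  have key : (t - 1) * (t + 1) * (‖s‖ ^ 2 - (-(m / (t - 1)) + m / (t + 1)) * s.re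
      + -(m / (t - 1)) * (m / (t + 1))) = (t ^ 2 - 1) * ‖s‖ ^ 2 + 2 * m * s.re - m ^ 2 := by
    field_simp
    ring
  nlinarith [mul_nonneg (mul_pos h1 h2).le (neg_nonneg.mpr hs)]

theorem sum_div_one_add_two_mul_le {ι : Type*} (s : Finset ι) {u : ι → ℝ}
    (hu : ∀ i ∈ s, 0 ≤ u i) :
    ∑ i ∈ s, u i / (1 + 2 * u i) ≤ #s * (∑ i ∈ s, u i) / (#s + 2 * ∑ i ∈ s, u i) := by
  rcases s.eq_empty_or_nonempty with rfl | hs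
  · simp
  have hpos : (0 : ℝ) < #s + 2 * ∑ i ∈ s, u i := by
    have := sum_nonneg hu
    have : (0 : ℝ) < #s := by exact_mod_cast hs.card_pos
    linarith
  have titu := sq_sum_div_le_sum_sq_div s (fun _ => (1 : ℝ)) (g := fun i => 1 + 2 * u i)
    fun i hi => by linarith [hu i hi]
  simp only [sum_const, nsmul_eq_mul, mul_one, one_pow, sum_add_distrib, ← mul_sum] at titu
  have hsplit : ∑ i ∈ s, u i / (1 + 2 * u i) = (#s - ∑ i ∈ s, 1 / (1 + 2 * u i)) / 2 := by
    rw [card_eq_sum_ones, Nat.cast_sum, ← sum_sub_distrib, sum_div]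
    refine sum_congr rfl fun i hi => ?_
    have : 1 + 2 * u i ≠ 0 := by linarith [hu i hi]
    rw [Nat.cast_one, one_sub_div this]
    field_simp
    ring
  rw [hsplit]
  calc (#s - ∑ i ∈ s, 1 / (1 + 2 * u i)) / 2
      ≤ (#s - #s ^ 2 / (#s + 2 * ∑ i ∈ s, u i)) / 2 := by linarith
    _ = #s * (∑ i ∈ s, u i) / (#s + 2 * ∑ i ∈ s, u i) := by
      field_simp
      ring

theorem norm_sum_le_norm_sub_sum {n : ℕ} {z : Fin n → ℂ} (hz : ∀ ν, 1 ≤ ‖z ν‖) {w : ℂ}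
    (hw : ‖w‖ = 1) : ‖∑ ν, w / (w - z ν)‖ ≤ ‖(n : ℂ) - ∑ ν, w / (w - z ν)‖ := by
  rw [← Complex.ofReal_natCast]
  refine norm_le_norm_sub_of_two_mul_re_le (Nat.cast_nonneg n) ?_
  calc 2 * (∑ ν, w / (w - z ν)).re = ∑ ν, 2 * (w / (w - z ν)).re := by
        rw [Complex.re_sum, mul_sum]
    _ ≤ ∑ _ν : Fin n, (1 : ℝ) := sum_le_sum fun ν _ => two_mul_re_div_sub_le_one hw (hz ν)
    _ = n := by simp

theorem mul_norm_sum_le_norm_sub_sum {n : ℕ} (hn : 1 ≤ n) {z : Fin n → ℂ} {k : Fin n → ℝ}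
    (hk : ∀ ν, 1 < k ν) (hzk : ∀ ν, k ν ≤ ‖z ν‖) {w : ℂ} (hw : ‖w‖ = 1) :
    (1 + n / ∑ ν, 1 / (k ν - 1)) * ‖∑ ν, w / (w - z ν)‖
      ≤ ‖(n : ℂ) - ∑ ν, w / (w - z ν)‖ := by
  set S := ∑ ν, 1 / (k ν - 1)
  have hu : ∀ ν, 0 < 1 / (k ν - 1) := fun ν => one_div_pos.mpr (sub_pos.mpr (hk ν))
  have hS : 0 < S := sum_pos (fun ν _ => hu ν) (univ_nonempty_iff.mpr ⟨⟨0, hn⟩⟩)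
  have hn0 : (0 : ℝ) < n := by exact_mod_cast hn
  have hleft : -S ≤ ∑ ν, -(‖z ν‖ - 1)⁻¹ := by
    rw [sum_neg_distrib, neg_le_neg_iff]
    refine sum_le_sum fun ν _ => ?_
    rw [one_div]
    exact inv_anti₀ (sub_pos.mpr (hk ν)) (by linarith [hzk ν])
  have hright : ∑ ν, (‖z ν‖ + 1)⁻¹ ≤ n / (1 + n / S + 1) := calc
    ∑ ν, (‖z ν‖ + 1)⁻¹ ≤ ∑ ν, (k ν + 1)⁻¹ :=
      sum_le_sum fun ν _ => inv_anti₀ (by linarith [hk ν]) (by linarith [hzk ν])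
    _ = ∑ ν, 1 / (k ν - 1) / (1 + 2 * (1 / (k ν - 1))) := by
      refine sum_congr rfl fun ν _ => ?_
      have : k ν - 1 ≠ 0 := (sub_pos.mpr (hk ν)).ne'
      field_simp
      ring
    _ ≤ n * S / (n + 2 * S) := by
      have := sum_div_one_add_two_mul_le univ fun ν _ => (hu ν).le
      rwa [card_univ, Fintype.card_fin] at this
    _ = n / (1 + n / S + 1) := by
      field_simp
      ring
  have hcenter : (n : ℝ) / (1 + n / S - 1) = S := by
    rw [add_sub_cancel_left, div_div_cancel₀ hn0.ne']
  rw [← Complex.ofReal_natCast]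
  refine mul_norm_le_norm_sub_of_mem_diameterDisc (Nat.cast_nonneg n)
    (by linarith [div_pos hn0 hS]) ?_
  rw [hcenter]
  exact diameterDisc_mono hleft hright
    (sum_mem_diameterDisc fun ν _ => div_sub_mem_diameterDisc hw ((hk ν).trans_le (hzk ν)))

theorem exists_eq_one_of_not_forall_one_lt {ι : Type*} {k : ι → ℝ} (hk1 : ∀ i, 1 ≤ k i)
    (h : ¬∀ i, 1 < k i) : ∃ i, k i = 1 := by
  push Not at h
  obtain ⟨i, hi⟩ := h
  exact ⟨i, le_antisymm hi (hk1 i)⟩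

theorem mul_norm_derivative_eval_le {n : ℕ} (hn : 1 ≤ n) {a : ℂ} {z : Fin n → ℂ} {P : ℂ[X]}
    (hP : P = C a * ∏ ν, (X - C (z ν))) {k : Fin n → ℝ} (hk1 : ∀ ν, 1 ≤ k ν)
    (hzk : ∀ ν, k ν ≤ ‖z ν‖) {t₀ : ℝ}
    (ht₀ : (∀ ν, 1 < k ν) → t₀ = 1 + (n : ℝ) / ∑ ν, 1 / (k ν - 1))
    (ht₀' : (∃ ν, k ν = 1) → t₀ = 1) {w : ℂ} (hw : ‖w‖ = 1) :
    t₀ * ‖P.derivative.eval w‖ ≤ ‖(n : ℂ) * P.eval w - w * P.derivative.eval w‖ := by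
  by_cases hroot : ∃ ν, z ν = w
  · obtain ⟨ν, rfl⟩ := hroot
    have hPw : P.eval (z ν) = 0 := by
      simp [hP, eval_prod, prod_eq_zero (mem_univ ν)]
    rw [ht₀' ⟨ν, le_antisymm (hw ▸ hzk ν) (hk1 ν)⟩, hPw, mul_zero, zero_sub, norm_neg,
      norm_mul, hw]
  push Not at hroot
  set s := ∑ ν, w / (w - z ν)
  have hlog : w * P.derivative.eval w = P.eval w * s := by
    rw [hP, derivative_C_mul, eval_mul, eval_mul, eval_C,
      eval_derivative_prod_X_sub_C _ _ fun ν _ => (hroot ν).symm, eval_prod]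
    simp only [eval_sub, eval_X, eval_C, s, div_eq_mul_inv, ← mul_sum]
    ring
  have hs : t₀ * ‖s‖ ≤ ‖(n : ℂ) - s‖ := by
    by_cases hall : ∀ ν, 1 < k ν
    · rw [ht₀ hall]
      exact mul_norm_sum_le_norm_sub_sum hn hall hzk hw
    · obtain ⟨ν, hν⟩ := exists_eq_one_of_not_forall_one_lt hk1 hall
      rw [ht₀' ⟨ν, hν⟩, one_mul]
      exact norm_sum_le_norm_sub_sum (fun ν => (hk1 ν).trans (hzk ν)) hw
  calc t₀ * ‖P.derivative.eval w‖ = ‖P.eval w‖ * (t₀ * ‖s‖) := by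
        rw [← one_mul ‖P.derivative.eval w‖, ← hw, ← norm_mul, hlog, norm_mul]
        ring
    _ ≤ ‖P.eval w‖ * ‖(n : ℂ) - s‖ := by gcongr
    _ = ‖(n : ℂ) * P.eval w - w * P.derivative.eval w‖ := by
        rw [hlog, ← norm_mul]
        ring_nf

theorem stmt_9_general (n : ℕ) (hn : 1 ≤ n) (a : ℂ) (z : Fin n → ℂ)
    (P Q : Polynomial ℂ)
    (hP : P = Polynomial.C a * ∏ ν, (Polynomial.X - Polynomial.C (z ν)))
    (hQ : Q = Polynomial.reflect n (P.map (starRingEnd ℂ)))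
    (k : Fin n → ℝ) (hk1 : ∀ ν, 1 ≤ k ν) (hzk : ∀ ν, k ν ≤ ‖z ν‖)
    (t₀ : ℝ)
    (ht₀ : (∀ ν, 1 < k ν) → t₀ = 1 + (n : ℝ) / ∑ ν, 1 / (k ν - 1))
    (ht₀' : (∃ ν, k ν = 1) → t₀ = 1)
    (α : ℂ) (hα : 1 ≤ ‖α‖) :
    ∀ w : ℂ, ‖w‖ = 1 →
      (1 + t₀) * ‖(n : ℂ) * P.eval w + (α - w) * P.derivative.eval w‖ ≤
        (‖α‖ + t₀) *
          (‖P.derivative.eval w‖ + ‖Q.derivative.eval w‖) := by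
  intro w hw
  have hdeg : P.natDegree ≤ n := by
    rw [hP]
    refine (natDegree_C_mul_le _ _).trans ((natDegree_prod_le _ _).trans ?_)
    simp
  have hQw := hQ ▸ norm_derivative_reflect_map_conj_eval hdeg hw
  have hkey := mul_norm_derivative_eval_le hn hP hk1 hzk ht₀ ht₀' hw
  have ht₀_nonneg : 0 ≤ t₀ := by
    by_cases hall : ∀ ν, 1 < k ν
    · have : 0 ≤ ∑ ν, 1 / (k ν - 1) :=
        sum_nonneg fun ν _ => (one_div_pos.mpr (sub_pos.mpr (hall ν))).le
      rw [ht₀ hall]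
      positivity
    · obtain ⟨ν, hν⟩ := exists_eq_one_of_not_forall_one_lt hk1 hall
      rw [ht₀' ⟨ν, hν⟩]
      exact zero_le_one
  have htri : ‖(n : ℂ) * P.eval w + (α - w) * P.derivative.eval w‖
      ≤ ‖(n : ℂ) * P.eval w - w * P.derivative.eval w‖ + ‖α‖ * ‖P.derivative.eval w‖ := by
    rw [← norm_mul, show (n : ℂ) * P.eval w + (α - w) * P.derivative.eval w
      = ((n : ℂ) * P.eval w - w * P.derivative.eval w) + α * P.derivative.eval w by ring]
    exact norm_add_le _ _
  rw [hQw]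
  nlinarith [mul_le_mul_of_nonneg_left htri (by linarith : 0 ≤ 1 + t₀),
    mul_nonneg (sub_nonneg.mpr hα) (sub_nonneg.mpr hkey)]

/-- If `P(z) = a ∏ (z - z_ν)` has degree `n ≥ 1` with `|z_ν| ≥ k_ν ≥ 1`, and
`Q(z) = z^n conj(P(1/conj z))`, then with `t₀` as defined, for `|α| ≥ 1` and `|z| = 1`,
`(1 + t₀)|D_α P(z)| ≤ (|α| + t₀)(|P'(z)| + |Q'(z)|)`. -/
theorem stmt_9 (n : ℕ) (hn : 1 ≤ n) (a : ℂ) (ha : a ≠ 0) (z : Fin n → ℂ)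
    (P Q : Polynomial ℂ)
    (hP : P = Polynomial.C a * ∏ ν, (Polynomial.X - Polynomial.C (z ν)))
    (hQ : Q = Polynomial.reflect n (P.map (starRingEnd ℂ)))
    (k : Fin n → ℝ) (hk1 : ∀ ν, 1 ≤ k ν) (hzk : ∀ ν, k ν ≤ ‖z ν‖)
    (t₀ : ℝ)
    (ht₀ : (∀ ν, 1 < k ν) → t₀ = 1 + (n : ℝ) / ∑ ν, 1 / (k ν - 1))
    (ht₀' : (∃ ν, k ν = 1) → t₀ = 1)
    (α : ℂ) (hα : 1 ≤ ‖α‖) :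
    ∀ w : ℂ, ‖w‖ = 1 →
      (1 + t₀) * ‖(n : ℂ) * P.eval w + (α - w) * P.derivative.eval w‖ ≤
        (‖α‖ + t₀) *
          (‖P.derivative.eval w‖ + ‖Q.derivative.eval w‖) :=
  stmt_9_general n hn a z P Q hP hQ k hk1 hzk t₀ ht₀ ht₀' α hα
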